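/- arXiv:1606.03617 — 5 statements merged into one kernel-verified Lean document; each statement's English description precedes it below -/
import Mathlib

section
/- Let R be an integral domain of characteristic zero and R[t] the polynomial ring in one variable t over R. A pair (X, Y) of polynomials in R[t] satisfies the Pell equation X² − (t² − 1)·Y² = 1 if and only if there exist a natural number n and signs ε, δ ∈ {1, −1} such that X = ε·T_n and Y = δ·U_{n−1}, where T_n and U_{n−1} denote the images in R[t] of the Chebyshev polynomials of the first and second kind (with the convention U_{−1} = 0, so the pairs (±1, 0) are included). -/
/-!
A solution of `P² − (t² − 1) Q² = 1` is a unit `P + Q √(t² − 1)` of norm one, and these units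
are `±(t + √(t² − 1))ⁿ = ±(T_n + U_{n−1} √(t² − 1))` with `n ∈ ℤ`.
If `Q ≠ 0`, one of `t Q − P`, `t Q + P` has degree less than `Q`: they multiply to `Q² − 1` and
add up to `2 t Q`, of degree `deg Q + 1`. Multiplying the solution by `t ∓ √(t² − 1)` accordingly
produces a solution with second coordinate `t Q ∓ P`, so the degree of `Q` descends until `Q = 0`
and `P = ±1`.
-/

open Polynomial

namespace Polynomial.Chebyshev

variable (R : Type*) [CommRing R]

theorem T_add_one_eq_X_mul_T_add_pol_U (n : ℤ) :
    T R (n + 1) = X * T R n + (X ^ 2 - 1) * U R (n - 1) := by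
  have h := one_sub_X_sq_mul_U_eq_pol_in_T R (n - 1)
  rw [sub_add_cancel, show n - 1 + 2 = n + 1 by ring] at h
  linear_combination h

theorem U_eq_X_mul_U_sub_one_add_T (n : ℤ) : U R n = X * U R (n - 1) + T R n := by
  simpa using U_eq_X_mul_U_add_T R (n - 1)

theorem T_sq_sub_X_sq_sub_one_mul_U_sq (n : ℤ) :
    T R n ^ 2 - (X ^ 2 - 1) * U R (n - 1) ^ 2 = 1 := by
  induction n using Int.induction_on with
  | zero => simp
  | succ n ih =>
    rw [add_sub_cancel_right, T_add_one_eq_X_mul_T_add_pol_U R n, U_eq_X_mul_U_sub_one_add_T R n]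
    linear_combination ih
  | pred n ih =>
    have hT := T_add_one_eq_X_mul_T_add_pol_U R (-n - 1)
    have hU := U_eq_X_mul_U_sub_one_add_T R (-n - 1)
    rw [sub_add_cancel] at hT
    rw [hT, hU] at ih
    linear_combination ih

end Polynomial.Chebyshev

open Polynomial.Chebyshev hiding C

section

variable {R : Type*} [CommRing R]

/-- `P + Q √(X² − 1) = ±(X + √(X² − 1))ⁿ` for some `n : ℤ`. -/
def IsChebyshevPair (P Q : R[X]) : Prop :=
  ∃ (n : ℤ) (ε : R), (ε = 1 ∨ ε = -1) ∧ P = C ε * T R n ∧ Q = C ε * U R (n - 1)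

theorem isChebyshevPair_one : IsChebyshevPair (1 : R[X]) 0 :=
  ⟨0, 1, Or.inl rfl, by simp, by simp⟩

theorem IsChebyshevPair.neg_left {P Q : R[X]} (h : IsChebyshevPair P Q) :
    IsChebyshevPair (-P) Q := by
  obtain ⟨n, ε, hε, rfl, rfl⟩ := h
  refine ⟨-n, -ε, by rcases hε with rfl | rfl <;> simp, ?_, ?_⟩
  · rw [T_neg, map_neg, neg_mul]
  · rw [U_neg_sub_one, map_neg, neg_mul_neg]

/-- `(X P − (X² − 1) Q) + (X Q − P) √(X² − 1) = (P + Q √(X² − 1)) (X − √(X² − 1))`. -/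
theorem IsChebyshevPair.of_descent {P Q : R[X]}
    (h : IsChebyshevPair (X * P - (X ^ 2 - 1) * Q) (X * Q - P)) : IsChebyshevPair P Q := by
  obtain ⟨n, ε, hε, hP, hQ⟩ := h
  refine ⟨n + 1, ε, hε, ?_, ?_⟩
  · rw [T_add_one_eq_X_mul_T_add_pol_U]
    linear_combination X * hP + (X ^ 2 - 1) * hQ
  · rw [add_sub_cancel_right, U_eq_X_mul_U_sub_one_add_T]
    linear_combination hP + X * hQ

variable [IsDomain R] [NeZero (2 : R)]

theorem degree_X_mul_sub_lt_or_degree_X_mul_add_lt {P Q : R[X]} (hQ : Q ≠ 0)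
    (h : P ^ 2 - (X ^ 2 - 1) * Q ^ 2 = 1) :
    (X * Q - P).degree < Q.degree ∨ (X * Q + P).degree < Q.degree := by
  by_contra! hge
  obtain ⟨hA, hB⟩ := hge
  have hprod : (X * Q - P) * (X * Q + P) = Q ^ 2 - 1 := by linear_combination -h
  have hsum : (X * Q - P) + (X * Q + P) = C 2 * (X * Q) := by rw [map_ofNat]; ring
  have hprod_le : (X * Q - P).natDegree + (X * Q + P).natDegree ≤ 2 * Q.natDegree := by
    rw [← natDegree_mul (ne_zero_of_degree_ge_degree hA hQ) (ne_zero_of_degree_ge_degree hB hQ),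
      hprod]
    exact (natDegree_sub_le _ _).trans (by simp [natDegree_pow])
  have hsum_le : (C 2 * (X * Q)).natDegree ≤ Q.natDegree := by
    rw [← hsum]
    have hA_nat := natDegree_le_natDegree hA
    have hB_nat := natDegree_le_natDegree hB
    exact natDegree_add_le_of_degree_le (by omega) (by omega)
  rw [natDegree_C_mul two_ne_zero, natDegree_X_mul hQ] at hsum_le
  omega

theorem isChebyshevPair_of_pell {P Q : R[X]} (h : P ^ 2 - (X ^ 2 - 1) * Q ^ 2 = 1) :
    IsChebyshevPair P Q := by
  induction Q using degree_lt_wf.induction generalizing P with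
  | _ Q ih =>
  obtain rfl | hQ := eq_or_ne Q 0
  · obtain rfl | rfl := sq_eq_one_iff.mp (by linear_combination h : P ^ 2 = 1)
    · exact isChebyshevPair_one
    · exact isChebyshevPair_one.neg_left
  have descend (P : R[X]) (h : P ^ 2 - (X ^ 2 - 1) * Q ^ 2 = 1)
      (hlt : (X * Q - P).degree < Q.degree) : IsChebyshevPair P Q :=
    .of_descent (ih _ hlt (by linear_combination h))
  rcases degree_X_mul_sub_lt_or_degree_X_mul_add_lt hQ h with hlt | hlt
  · exact descend P h hlt
  · simpa using (descend (-P) (by linear_combination h) (by rwa [sub_neg_eq_add])).neg_left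

end

/-- Let `R` be an integral domain of characteristic zero. A pair `(X, Y)` of
polynomials in `R[t]` satisfies the Pell equation `X² − (t² − 1)·Y² = 1` if and
only if there exist `n : ℕ` and signs `ε, δ ∈ {1, −1}` with `X = ε·T_n` and
`Y = δ·U_{n−1}`, where `T`, `U` are the Chebyshev polynomials of the first and
second kind (with `U_{−1} = 0`). -/
theorem pell_solutions_polynomial_ring (R : Type*) [CommRing R] [IsDomain R] [CharZero R]
    (X Y : Polynomial R) :
    X ^ 2 - (Polynomial.X ^ 2 - 1) * Y ^ 2 = 1 ↔
      ∃ (n : ℕ) (ε δ : R), (ε = 1 ∨ ε = -1) ∧ (δ = 1 ∨ δ = -1) ∧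
        X = Polynomial.C ε * Polynomial.Chebyshev.T R n ∧
        Y = Polynomial.C δ * Polynomial.Chebyshev.U R ((n : ℤ) - 1) := by
  constructor
  · intro h
    obtain ⟨n, ε, hε, rfl, rfl⟩ := isChebyshevPair_of_pell h
    obtain ⟨n, rfl | rfl⟩ := Int.eq_nat_or_neg n
    · exact ⟨n, ε, ε, hε, hε, rfl, rfl⟩
    · refine ⟨n, ε, -ε, hε, by rcases hε with rfl | rfl <;> simp, by rw [T_neg], ?_⟩
      rw [U_neg_sub_one, map_neg, mul_neg, neg_mul]
  · rintro ⟨n, ε, δ, hε, hδ, rfl, rfl⟩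
    rcases hε with rfl | rfl <;> rcases hδ with rfl | rfl <;>
      simpa using T_sq_sub_X_sq_sub_one_mul_U_sq R n
end

section
/- Let R be an integral domain of characteristic zero. The set of values { Y(1) : Y ∈ R[t] and there exists X ∈ R[t] with X² − (t² − 1)·Y² = 1 }, where Y(1) denotes evaluation of the polynomial Y at t = 1, is exactly the image of ℤ under the canonical ring homomorphism ℤ → R. (The solutions of the Pell equation are the pairs (±T_n, ±U_{n−1}) and ±U_{n−1}(1) = ±n, while the solution (±1, 0) contributes the value 0.) -/
/-!
The pairs `(T n, U (n - 1))` solve `W² - (X² - 1) Y² = 1`, since they arise from `(1, 0)` by repeated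
multiplication with the fundamental solution `X + √(X² - 1)`, and `U (n - 1)` takes the value `n`
at `1`. Conversely, for a solution with `Y ∉ {0, 1, -1}`, the factorisation
`(W - X Y) (W + X Y) = 1 - Y²` together with `(W + X Y) - (W - X Y) = 2 X Y` forces one of
`W ∓ X Y` to have degree smaller than `Y`; it is the `Y`-part of the solution obtained by
multiplying with `X ± √(X² - 1)`. Since `W(1) = ±1`, this descent changes `Y(1)` by `±1`, and it
ends at `Y ∈ {0, 1, -1}`.
-/

open Polynomial Polynomial.Chebyshev

namespace Polynomial

section CommRing

variable {R : Type*} [CommRing R]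

noncomputable def pellForm (W Y : R[X]) : R[X] := W ^ 2 - (X ^ 2 - 1) * Y ^ 2

theorem pellForm_neg_right (W Y : R[X]) : pellForm W (-Y) = pellForm W Y := by
  simp only [pellForm, neg_sq]

/-- Multiplication of `W + Y √(X² - 1)` by `X + √(X² - 1)` preserves the norm. -/
theorem pellForm_mul_fundamental (W Y : R[X]) :
    pellForm (X * W + (X ^ 2 - 1) * Y) (W + X * Y) = pellForm W Y := by
  simp only [pellForm]
  ring

theorem Chebyshev.pellForm_T_U (n : ℤ) : pellForm (T R n) (U R (n - 1)) = 1 := by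
  suffices h : ∀ n : ℕ, pellForm (T R n) (U R (n - 1)) = 1 by
    obtain ⟨n, rfl | rfl⟩ := Int.eq_nat_or_neg n
    · exact h n
    · rw [T_neg, U_neg_sub_one, pellForm_neg_right, h n]
  intro n
  induction n with
  | zero => simp [pellForm]
  | succ n ih =>
    have hT := T_eq_X_mul_T_sub_pol_U R (n - 1)
    have hU := U_eq_X_mul_U_add_T R (n - 1)
    rw [show (n : ℤ) - 1 + 2 = n + 1 by ring, sub_add_cancel] at hT
    rw [sub_add_cancel] at hU
    calc pellForm (T R (n + 1 : ℕ)) (U R ((n + 1 : ℕ) - 1))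
        = pellForm (X * T R n + (X ^ 2 - 1) * U R (n - 1)) (T R n + X * U R (n - 1)) := by
          push_cast
          rw [add_sub_cancel_right, hT, hU]
          congr 1 <;> ring
      _ = 1 := by rw [pellForm_mul_fundamental, ih]

end CommRing

section IsDomain

variable {R : Type*} [CommRing R] [IsDomain R] [NeZero (2 : R)]

theorem natDegree_sub_lt_or_natDegree_add_lt_of_pellForm_eq_one {W Y : R[X]}
    (h : pellForm W Y = 1) (hY0 : Y ≠ 0) (hY1 : Y ^ 2 ≠ 1) :
    (W - X * Y).natDegree < Y.natDegree ∨ (W + X * Y).natDegree < Y.natDegree := by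
  set A := W - X * Y
  set B := W + X * Y
  have hAB : A * B = 1 - Y ^ 2 := by
    simp only [A, B, pellForm] at h ⊢
    linear_combination h
  have hAB0 : A * B ≠ 0 := hAB ▸ sub_ne_zero.mpr (Ne.symm hY1)
  have hsum : A.natDegree + B.natDegree ≤ 2 * Y.natDegree := by
    rw [← natDegree_mul (left_ne_zero_of_mul hAB0) (right_ne_zero_of_mul hAB0), hAB]
    exact (natDegree_sub_le _ _).trans (by simp [natDegree_pow])
  have hdiff : Y.natDegree + 1 ≤ max B.natDegree A.natDegree :=
    calc Y.natDegree + 1 = (C 2 * Y * X).natDegree := by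
          rw [natDegree_mul_X (mul_ne_zero (C_ne_zero.mpr two_ne_zero) hY0),
            natDegree_C_mul two_ne_zero]
      _ = (B - A).natDegree := by
          congr 1
          simp only [A, B, C_ofNat]
          ring
      _ ≤ max B.natDegree A.natDegree := natDegree_sub_le _ _
  omega

theorem eval_one_mem_range_intCast_of_pellForm_eq_one {W Y : R[X]} (h : pellForm W Y = 1) :
    Y.eval 1 ∈ Set.range (Int.cast : ℤ → R) := by
  induction hd : Y.natDegree using Nat.strong_induction_on generalizing W Y with
  | _ d ih =>
  have hW : W.eval 1 = 1 ∨ W.eval 1 = -1 := by simpa [pellForm] using congrArg (eval 1) h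
  by_cases hY0 : Y = 0
  · exact ⟨0, by simp [hY0]⟩
  by_cases hY1 : Y ^ 2 = 1
  · obtain h1 | h1 : Y.eval 1 = 1 ∨ Y.eval 1 = -1 := by simpa using congrArg (eval 1) hY1
    exacts [⟨1, by simp [h1]⟩, ⟨-1, by simp [h1]⟩]
  have descend (Y' : R[X]) (h' : pellForm W Y' = 1) (hlt : (W + X * Y').natDegree < d) :
      Y'.eval 1 ∈ Set.range (Int.cast : ℤ → R) := by
    obtain ⟨m, hm⟩ := ih _ hlt ((pellForm_mul_fundamental W Y').trans h') rfl
    simp only [eval_add, eval_mul, eval_X, one_mul] at hm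
    rcases hW with hW | hW
    exacts [⟨m - 1, by push_cast; rw [hm, hW]; ring⟩, ⟨m + 1, by push_cast; rw [hm, hW]; ring⟩]
  rcases natDegree_sub_lt_or_natDegree_add_lt_of_pellForm_eq_one h hY0 hY1 with hlt | hlt
  · obtain ⟨n, hn⟩ := descend (-Y) ((pellForm_neg_right W Y).trans h)
      (by rwa [mul_neg, ← sub_eq_add_neg, ← hd])
    exact ⟨-n, by simpa [neg_eq_iff_eq_neg] using hn⟩
  · exact descend Y h (hd ▸ hlt)

end IsDomain

end Polynomial

/-- Let `R` be an integral domain of characteristic zero. The set of values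
`Y(1)` of polynomials `Y ∈ R[t]` for which there exists `X ∈ R[t]` with
`X² − (t² − 1)·Y² = 1` is exactly the image of `ℤ` in `R`. -/
theorem pell_values_at_one_polynomial_ring (R : Type*) [CommRing R] [IsDomain R] [CharZero R] :
    { r : R | ∃ Y X : Polynomial R,
        X ^ 2 - (Polynomial.X ^ 2 - 1) * Y ^ 2 = 1 ∧ Y.eval 1 = r } =
      Set.range (Int.cast : ℤ → R) := by
  ext r
  constructor
  · rintro ⟨Y, W, h, rfl⟩
    exact eval_one_mem_range_intCast_of_pellForm_eq_one h
  · rintro ⟨n, rfl⟩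
    exact ⟨U R (n - 1), T R n, Chebyshev.pellForm_T_U n, by simp⟩
end

section
/- Let K be a field, A a set, a ∈ A, and let ā denote the image of the generator a in the free associative unital algebra 𝔸_K(A) over K on A. For all f, g ∈ 𝔸_K(A): f² + ā·g² = 0 if and only if f = 0 and g = 0. (Consequently a conjunction of two equations in 𝔸_K(A) is equivalent to a single equation.) -/
/-!
Substituting `t • x` for every generator `x` turns `f ∈ 𝔸_K(A)` into the polynomial
`∑ₙ fₙ tⁿ` whose coefficients are the homogeneous components of `f`. This map is injective
(set `t = 1`) and lands in a polynomial ring over a domain, where degrees add. Then `f² + ā g² = 0` with `g ≠ 0`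
would equate the even degree `2 deg f` with the odd degree `1 + 2 deg g`.
-/

open Polynomial

namespace Polynomial

variable {R : Type*} [Ring R] [NoZeroDivisors R]

theorem eq_zero_of_sq_add_mul_sq_eq_zero {p q r : R[X]} (hr : Odd r.natDegree)
    (h : p ^ 2 + r * q ^ 2 = 0) : q = 0 := by
  by_contra hq
  have hr0 : r ≠ 0 := by
    rintro rfl
    simp at hr
  have hdeg : (p ^ 2).natDegree = (r * q ^ 2).natDegree := by
    rw [eq_neg_of_add_eq_zero_left h, natDegree_neg]
  rw [natDegree_mul hr0 (pow_ne_zero 2 hq), natDegree_pow, natDegree_pow] at hdeg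
  obtain ⟨k, hk⟩ := hr
  omega

end Polynomial

namespace FreeAlgebra

variable (R : Type*) [CommSemiring R] {A : Type*}

noncomputable def gradedExpansion : FreeAlgebra R A →ₐ[R] (FreeAlgebra R A)[X] :=
  lift R fun x => C (ι R x) * X

@[simp]
theorem gradedExpansion_ι (x : A) : gradedExpansion R (ι R x) = C (ι R x) * X :=
  lift_ι_apply _ _

theorem eval_one_comp_gradedExpansion :
    (eval₂AlgHom (AlgHom.id R _) 1 fun _ => Commute.one_right _).comp (gradedExpansion R) =
      AlgHom.id R (FreeAlgebra R A) := by
  ext x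
  simp

theorem gradedExpansion_injective : Function.Injective (gradedExpansion R (A := A)) :=
  Function.LeftInverse.injective (g := eval₂AlgHom (AlgHom.id R _) 1 fun _ => Commute.one_right _)
    (AlgHom.congr_fun (eval_one_comp_gradedExpansion R))

theorem natDegree_gradedExpansion_ι [Nontrivial R] (x : A) :
    (gradedExpansion R (ι R x)).natDegree = 1 := by
  rw [gradedExpansion_ι, natDegree_C_mul_X _ (ι_ne_zero x)]

end FreeAlgebra

open FreeAlgebra in
/-- In the free associative unital algebra `𝔸_K(A)` over a field `K`, for a
generator `a ∈ A` and any `f, g ∈ 𝔸_K(A)` one has `f² + ā·g² = 0` iff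
`f = 0` and `g = 0`. -/
theorem freeAlgebra_sq_add_gen_mul_sq_eq_zero (K : Type*) [Field K] (A : Type*) (a : A)
    (f g : FreeAlgebra K A) :
    f ^ 2 + FreeAlgebra.ι K a * g ^ 2 = 0 ↔ f = 0 ∧ g = 0 := by
  constructor
  · intro h
    have hg : g = 0 := by
      apply gradedExpansion_injective K
      rw [map_zero]
      have hodd : Odd (gradedExpansion K (ι K a)).natDegree := by
        rw [natDegree_gradedExpansion_ι]
        exact odd_one
      exact eq_zero_of_sq_add_mul_sq_eq_zero hodd
        (by simpa only [map_add, map_mul, map_pow, map_zero] using congrArg (gradedExpansion K) h)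
    subst hg
    simpa using h
  · rintro ⟨rfl, rfl⟩
    simp
end

section
/- Let K be a field, G a torsion-free group, and g ∈ G an element such that C_G(g^k) = C_G(g) for every nonzero integer k, where C_G(·) denotes the centralizer in G. Then an element u of the group algebra K(G) commutes with g if and only if every group element in the support of u lies in C_G(g). Consequently the centralizer C_{K(G)}(g) = { u ∈ K(G) : u·g = g·u } equals the K-linear span of C_G(g) and is isomorphic as a K-algebra to the group algebra K(C_G(g)). -/
/-!
Commuting with `g` says that the coefficient function of `u` is invariant under conjugation by `g`,
hence by every power `gⁿ`. For `h` in the support of `u`, all conjugates `gⁿ h g⁻ⁿ` then lie in the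
finite support, so two of them coincide and some `gᵏ` with `k ≠ 0` commutes with `h`; the hypothesis
`C_G(gᵏ) = C_G(g)` puts `h` in `C_G(g)`. So the centralizer of `g` in `K(G)` is the submodule of
elements supported on `C_G(g)`, which is the image of the injective algebra map `K(C_G(g)) → K(G)`.
-/

/-- A predicate on a monoid saying that only `1` is of finite order (old Mathlib definition). -/
def Monoid.IsTorsionFree (G : Type*) [Monoid G] : Prop :=
  ∀ g : G, g ≠ 1 → ¬IsOfFinOrder g

open MonoidAlgebra Subgroup

theorem exists_zpow_commute_of_finite_range_conj {G : Type*} [Group G] {g h : G}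
    (hfin : (Set.range fun n : ℕ => g ^ n * h * (g ^ n)⁻¹).Finite) :
    ∃ k : ℤ, k ≠ 0 ∧ Commute (g ^ k) h := by
  obtain ⟨m, n, hmn, e⟩ := hfin.exists_lt_map_eq_of_forall_mem Set.mem_range_self
  refine ⟨n - m, sub_ne_zero.mpr (by exact_mod_cast hmn.ne'), ?_⟩
  have hconj : g ^ ((n : ℤ) - m) * h * (g ^ ((n : ℤ) - m))⁻¹ = h := by
    calc g ^ ((n : ℤ) - m) * h * (g ^ ((n : ℤ) - m))⁻¹
        = (g ^ m)⁻¹ * (g ^ n * h * (g ^ n)⁻¹) * g ^ m := by group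
      _ = h := by rw [← e]; group
  exact mul_inv_eq_iff_eq_mul.mp hconj

namespace MonoidAlgebra

variable {R G : Type*} [Group G]

section Semiring

variable [Semiring R]

theorem commute_of_iff_forall_coeff_conj_eq {u : R[G]} {g : G} :
    Commute u (of R G g) ↔ ∀ h, u.coeff (g * h * g⁻¹) = u.coeff h := by
  constructor
  · intro hu h
    simpa [mul_assoc] using congrArg (fun v : R[G] => v.coeff (g * h)) hu
  · intro hu
    ext x
    simpa [mul_assoc] using hu (g⁻¹ * x)

theorem support_subset_centralizer_of_commute {u : R[G]} {g : G}
    (hc : ∀ k : ℤ, k ≠ 0 → centralizer {g ^ k} ≤ centralizer {g})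
    (hu : Commute u (of R G g)) : ↑u.coeff.support ⊆ (centralizer {g} : Set G) := by
  intro h hh
  have hconj_mem (n : ℕ) : g ^ n * h * (g ^ n)⁻¹ ∈ u.coeff.support := by
    have hu_pow : Commute u (of R G (g ^ n)) := by
      rw [map_pow]
      exact hu.pow_right n
    rwa [Finsupp.mem_support_iff, commute_of_iff_forall_coeff_conj_eq.mp hu_pow,
      ← Finsupp.mem_support_iff]
  obtain ⟨k, hk, hcomm⟩ := exists_zpow_commute_of_finite_range_conj
    (u.coeff.support.finite_toSet.subset (Set.range_subset_iff.mpr hconj_mem))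
  exact hc k hk (mem_centralizer_singleton_iff.mpr hcomm.symm.eq)

end Semiring

variable [CommSemiring R]

theorem toSubmodule_range_mapDomainAlgHom {M N : Type*} [Monoid M] [Monoid N] (f : M →* N) :
    Subalgebra.toSubmodule (mapDomainAlgHom R R f).range = supported R R (Set.range f) := by
  classical
  apply le_antisymm
  · intro y hy
    obtain ⟨x, rfl⟩ := (AlgHom.mem_range _).mp hy
    rw [mem_supported, mapDomainAlgHom_apply, coeff_mapDomain]
    refine (Finset.coe_subset.mpr Finsupp.mapDomain_support).trans ?_
    simp
  · rw [supported_eq_span_single, Submodule.span_le]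
    rintro _ ⟨_, ⟨m, rfl⟩, rfl⟩
    exact ⟨single m 1, by simp [mapDomain_single]⟩

theorem supported_centralizer_le_toSubmodule_centralizer_of (g : G) :
    supported R R (centralizer {g}) ≤
      Subalgebra.toSubmodule (Subalgebra.centralizer R {of R G g}) := by
  rw [supported_eq_span_single, Submodule.span_le]
  rintro _ ⟨h, hh, rfl⟩
  rw [SetLike.mem_coe, Subalgebra.mem_toSubmodule, Subalgebra.mem_centralizer_iff]
  rintro _ rfl
  change of R G g * of R G h = of R G h * of R G g
  rw [← map_mul, ← map_mul, mem_centralizer_singleton_iff.mp hh]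

theorem mem_centralizer_of_iff_mem_supported {u : R[G]} {g : G}
    (hc : ∀ k : ℤ, k ≠ 0 → centralizer {g ^ k} ≤ centralizer {g}) :
    u ∈ Subalgebra.centralizer R {of R G g} ↔ u ∈ supported R R (centralizer {g}) := by
  refine ⟨fun hu => ?_, fun hu => supported_centralizer_le_toSubmodule_centralizer_of g hu⟩
  rw [Subalgebra.mem_centralizer_iff] at hu
  exact support_subset_centralizer_of_commute hc (hu _ rfl).symm

end MonoidAlgebra

theorem centralizer_in_group_algebra_general (K G : Type*) [Field K] [Group G]
    (g : G)
    (hc : ∀ k : ℤ, k ≠ 0 → Subgroup.centralizer {g ^ k} = Subgroup.centralizer {g}) :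
    (∀ u : MonoidAlgebra K G,
        u * MonoidAlgebra.of K G g = MonoidAlgebra.of K G g * u ↔
          ∀ h ∈ u.coeff.support, h ∈ Subgroup.centralizer {g}) ∧
      Subalgebra.toSubmodule
          (Subalgebra.centralizer K ({MonoidAlgebra.of K G g} : Set (MonoidAlgebra K G))) =
        Submodule.span K (MonoidAlgebra.of K G '' (Subgroup.centralizer {g} : Set G)) ∧
      Nonempty
        ((Subalgebra.centralizer K ({MonoidAlgebra.of K G g} : Set (MonoidAlgebra K G))) ≃ₐ[K]
          MonoidAlgebra K (Subgroup.centralizer {g})) := by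
  have key (u : K[G]) := mem_centralizer_of_iff_mem_supported (u := u) fun k hk => (hc k hk).le
  have hsupp : Subalgebra.toSubmodule (Subalgebra.centralizer K {of K G g}) =
      supported K K (centralizer {g}) := Submodule.ext key
  have hrange : (mapDomainAlgHom K K (centralizer {g}).subtype).range =
      Subalgebra.centralizer K {of K G g} := by
    apply Subalgebra.toSubmodule_injective
    rw [toSubmodule_range_mapDomainAlgHom, hsupp, coe_subtype, Subtype.range_coe]
  refine ⟨fun u => ?_, ?_, ?_⟩
  · simpa [Subalgebra.mem_centralizer_iff, mem_supported, Set.subset_def, eq_comm] using key u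
  · rw [hsupp, supported_eq_span_single]
    rfl
  · exact ⟨(Subalgebra.equivOfEq _ _ hrange.symm).trans
      (AlgEquiv.ofInjective _ (mapDomain_injective (centralizer {g}).subtype_injective)).symm⟩

/-- Let `K` be a field, `G` a torsion-free group and `g ∈ G` with
`C_G(gᵏ) = C_G(g)` for all nonzero integers `k`. Then `u ∈ K(G)` commutes with
`g` iff the support of `u` lies in `C_G(g)`; consequently the centralizer of
`g` in `K(G)` is the `K`-span of `C_G(g)` and is isomorphic as a `K`-algebra to
the group algebra `K(C_G(g))`. -/
theorem centralizer_in_group_algebra (K G : Type*) [Field K] [Group G]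
    (htf : Monoid.IsTorsionFree G) (g : G)
    (hc : ∀ k : ℤ, k ≠ 0 → Subgroup.centralizer {g ^ k} = Subgroup.centralizer {g}) :
    (∀ u : MonoidAlgebra K G,
        u * MonoidAlgebra.of K G g = MonoidAlgebra.of K G g * u ↔
          ∀ h ∈ u.coeff.support, h ∈ Subgroup.centralizer {g}) ∧
      Subalgebra.toSubmodule
          (Subalgebra.centralizer K ({MonoidAlgebra.of K G g} : Set (MonoidAlgebra K G))) =
        Submodule.span K (MonoidAlgebra.of K G '' (Subgroup.centralizer {g} : Set G)) ∧
      Nonempty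
        ((Subalgebra.centralizer K ({MonoidAlgebra.of K G g} : Set (MonoidAlgebra K G))) ≃ₐ[K]
          MonoidAlgebra K (Subgroup.centralizer {g})) :=
  centralizer_in_group_algebra_general K G g hc
end

section
/- Let G = A ∗ B be the free product of two nontrivial groups A and B which are not both of order 2. Then there exists an element g ∈ G of infinite order whose centralizer in G is the infinite cyclic subgroup generated by g, i.e. C_G(g) = ⟨g⟩ ≅ ℤ, and moreover C_G(g^k) = C_G(g) for every nonzero integer k. (In the paper's terminology, G contains an element whose centralizer is of Laurent type.) -/
/-!
Take `g = a * b` with `a ∈ A`, `b ∈ B` nontrivial; the reduced word of `gᵏ` is `(a, b, …, a, b)`.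
If `x` commutes with `gᵏ`, then `gᵏ x` and `x gᵏ` have the same reduced word, hence the same
length. The reduced word of a product is the concatenation of the reduced words exactly when no
cancellation happens at the junction, and otherwise it is strictly shorter; so either both
concatenations are reduced, and then the reduced word of `x` commutes with `(a, b)ᵏ` as a list and
must be `(a, b)ᵐ`, or neither is, and then `x` begins in `B` and ends in `A`, so that `x⁻¹` falls
in the first case.
-/

namespace List

theorem exists_eq_flatten_replicate_of_append_comm {α : Type*} {x y : α} (hxy : x ≠ y) {k : ℕ}
    (hk : k ≠ 0) :
    ∀ {l : List α}, (replicate k [x, y]).flatten ++ l = l ++ (replicate k [x, y]).flatten →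
      ∃ m, l = (replicate m [x, y]).flatten
  | [], _ => ⟨0, rfl⟩
  | [c], h => by
    obtain ⟨k, rfl⟩ := Nat.exists_eq_succ_of_ne_zero hk
    have hxc : x = c := by simpa [replicate_succ] using congrArg head? h
    have hcy : c = y := by simpa [replicate_succ', getLast?_cons] using congrArg getLast? h
    exact absurd (hxc.trans hcy) hxy
  | c :: d :: l, h => by
    obtain ⟨k, rfl⟩ := Nat.exists_eq_succ_of_ne_zero hk
    obtain ⟨rfl, rfl, h⟩ : x = c ∧ y = d ∧ _ := by simpa [replicate_succ] using h
    obtain ⟨m, rfl⟩ := exists_eq_flatten_replicate_of_append_comm hxy hk (l := l) (by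
      conv_lhs => rw [replicate_succ', flatten_append]
      simpa [replicate_succ] using h)
    exact ⟨m + 1, by simp [replicate_succ]⟩

end List

namespace Monoid.CoprodI

open List

variable {ι : Type*} {G : ι → Type*} [∀ i, Group (G i)] {i j : ι} {a : G i} {b : G j}

section NormalForm

variable [DecidableEq ι] [∀ i, DecidableEq (G i)]

def normalForm (x : CoprodI G) : List (Σ i, G i) := (Word.equiv x).toList

theorem prod_normalForm (x : CoprodI G) : ((normalForm x).map fun l => of l.2).prod = x :=
  Word.equiv.symm_apply_apply x

theorem normalForm_prod (w : Word G) : normalForm w.prod = w.toList :=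
  congrArg Word.toList (Word.equiv.apply_symm_apply w)

theorem normalForm_injective : Function.Injective (normalForm (G := G)) := fun x y h => by
  rw [← prod_normalForm x, h, prod_normalForm]

theorem isChain_normalForm (x : CoprodI G) : (normalForm x).IsChain (·.1 ≠ ·.1) :=
  (Word.equiv x).chain_ne

theorem normalForm_one : normalForm (1 : CoprodI G) = [] :=
  normalForm_prod Word.empty

theorem normalForm_inv (x : CoprodI G) :
    normalForm x⁻¹ = ((normalForm x).map fun l => ⟨l.1, l.2⁻¹⟩).reverse := by
  let w : Word G :=
    { toList := ((normalForm x).map fun l => ⟨l.1, l.2⁻¹⟩).reverse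
      ne_one := by
        simp only [mem_reverse, mem_map]
        rintro _ ⟨l, hl, rfl⟩
        simpa using (Word.equiv x).ne_one l hl
      chain_ne := by simpa [isChain_reverse, isChain_map, ne_comm] using isChain_normalForm x }
  have hw : w.prod = x⁻¹ := by
    conv_rhs => rw [← prod_normalForm x]
    simp [w, Word.prod, List.prod_inv_reverse, Function.comp_def]
  rw [← hw, normalForm_prod]

theorem normalForm_mul_of_isChain {x y : CoprodI G}
    (h : (normalForm x ++ normalForm y).IsChain (·.1 ≠ ·.1)) :
    normalForm (x * y) = normalForm x ++ normalForm y := by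
  let w : Word G :=
    { toList := normalForm x ++ normalForm y
      ne_one := by
        simp only [mem_append]
        rintro l (hl | hl)
        exacts [(Word.equiv x).ne_one l hl, (Word.equiv y).ne_one l hl]
      chain_ne := h }
  have hw : w.prod = x * y := by
    simp [w, Word.prod, prod_normalForm]
  rw [← hw, normalForm_prod]

theorem Word.length_smul_le (m : G i) (w : Word G) :
    (of m • w).toList.length ≤ w.toList.length + 1 := by
  have length_rcons (p : Word.Pair G i) :
      p.tail.toList.length ≤ (Word.rcons p).toList.length ∧
        (Word.rcons p).toList.length ≤ p.tail.toList.length + 1 := by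
    unfold Word.rcons; split <;> simp
  calc (of m • w).toList.length ≤ (Word.equivPair i w).tail.toList.length + 1 :=
        (length_rcons _).2
    _ ≤ (Word.rcons (Word.equivPair i w)).toList.length + 1 := by grw [(length_rcons _).1]
    _ = w.toList.length + 1 := by rw [← Word.equivPair_symm, Equiv.symm_apply_apply]

theorem length_normalForm_of_mul_le (m : G i) (x : CoprodI G) :
    (normalForm (of m * x)).length ≤ (normalForm x).length + 1 := by
  change ((of m * x) • Word.empty).toList.length ≤ _
  rw [mul_smul]
  exact Word.length_smul_le m _

theorem length_normalForm_prod_le (L : List (Σ i, G i)) :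
    (normalForm (L.map fun l => of l.2).prod).length ≤ L.length := by
  induction L with
  | nil => simp [normalForm_one]
  | cons l L ih =>
    grw [map_cons, prod_cons, length_normalForm_of_mul_le, ih, length_cons]

theorem length_normalForm_mul_lt {x y : CoprodI G}
    (h : ¬(normalForm x ++ normalForm y).IsChain (·.1 ≠ ·.1)) :
    (normalForm (x * y)).length < (normalForm x).length + (normalForm y).length := by
  simp only [isChain_append, isChain_normalForm, true_and, not_forall, not_not] at h
  obtain ⟨⟨s, c⟩, hc, ⟨s', d⟩, hd, rfl : s = s'⟩ := h
  obtain ⟨u, hu⟩ := getLast?_eq_some_iff.1 hc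
  obtain ⟨v, hv⟩ := head?_eq_some_iff.1 hd
  have hxy : x * y = ((u ++ ⟨s, c * d⟩ :: v).map fun l => of l.2).prod := by
    conv_lhs => rw [← prod_normalForm x, ← prod_normalForm y, hu, hv]
    simp [mul_assoc]
  calc (normalForm (x * y)).length ≤ u.length + 1 + v.length := by
        grw [hxy, length_normalForm_prod_le]
        simp only [length_append, length_cons]
        omega
    _ < (normalForm x).length + (normalForm y).length := by simp [hu, hv]

theorem isChain_normalForm_append_swap_of_commute {x y : CoprodI G} (h : Commute x y)
    (hxy : (normalForm x ++ normalForm y).IsChain (·.1 ≠ ·.1)) :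
    (normalForm y ++ normalForm x).IsChain (·.1 ≠ ·.1) := by
  by_contra hyx
  have := length_normalForm_mul_lt hyx
  rw [← h.eq, normalForm_mul_of_isChain hxy, length_append] at this
  omega

theorem normalForm_of_mul_of_pow (hij : i ≠ j) (ha : a ≠ 1) (hb : b ≠ 1) (k : ℕ) :
    normalForm ((of a * of b) ^ k) = (replicate k [⟨i, a⟩, ⟨j, b⟩]).flatten := by
  let w : Word G :=
    { toList := (replicate k [⟨i, a⟩, ⟨j, b⟩]).flatten
      ne_one := by
        simp only [mem_flatten, mem_replicate]
        rintro l ⟨_, ⟨-, rfl⟩, hl⟩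
        simp only [mem_cons, not_mem_nil, or_false] at hl
        rcases hl with rfl | rfl
        exacts [ha, hb]
      chain_ne := by
        rw [isChain_flatten (by simp [mem_replicate])]
        exact ⟨by simp [mem_replicate, hij], isChain_replicate_of_rel _ (by simp [hij.symm])⟩ }
  have hw : w.prod = (of a * of b) ^ k := by
    simp [w, Word.prod, map_flatten, prod_flatten]
  rw [← hw, normalForm_prod]

theorem isChain_normalForm_of_mul_of_pow_append_inv (hij : i ≠ j) (ha : a ≠ 1) (hb : b ≠ 1)
    {k : ℕ} (hk : k ≠ 0) {x : CoprodI G}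
    (hx : ¬(normalForm x ++ normalForm ((of a * of b) ^ k)).IsChain (·.1 ≠ ·.1)) :
    (normalForm ((of a * of b) ^ k) ++ normalForm x⁻¹).IsChain (·.1 ≠ ·.1) := by
  obtain ⟨k, rfl⟩ := Nat.exists_eq_succ_of_ne_zero hk
  simp only [isChain_append, isChain_normalForm, true_and, not_forall, not_not] at hx ⊢
  obtain ⟨⟨s, c⟩, hc, l', hl', hsl'⟩ := hx
  obtain rfl : l' = ⟨i, a⟩ := by
    simpa [normalForm_of_mul_of_pow hij ha hb, replicate_succ] using hl'.symm
  obtain rfl : s = i := hsl'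
  simpa [normalForm_of_mul_of_pow hij ha hb, replicate_succ', normalForm_inv, Option.mem_def.1 hc]
    using hij.symm

theorem mem_zpowers_of_commute_pow_of_isChain (hij : i ≠ j) (ha : a ≠ 1) (hb : b ≠ 1) {k : ℕ}
    (hk : k ≠ 0) {x : CoprodI G} (hx : Commute x ((of a * of b) ^ k))
    (hchain : (normalForm ((of a * of b) ^ k) ++ normalForm x).IsChain (·.1 ≠ ·.1)) :
    x ∈ Subgroup.zpowers (of a * of b) := by
  have hlists := congrArg normalForm hx.eq
  rw [normalForm_mul_of_isChain hchain,
    normalForm_mul_of_isChain (isChain_normalForm_append_swap_of_commute hx.symm hchain),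
    normalForm_of_mul_of_pow hij ha hb] at hlists
  obtain ⟨m, hm⟩ := exists_eq_flatten_replicate_of_append_comm
    (fun h => hij (congrArg Sigma.fst h)) hk hlists.symm
  refine ⟨m, normalForm_injective ?_⟩
  dsimp only
  rw [zpow_natCast, normalForm_of_mul_of_pow hij ha hb, hm]

end NormalForm

theorem centralizer_of_mul_of_pow_le_zpowers (hij : i ≠ j) (ha : a ≠ 1) (hb : b ≠ 1) {k : ℕ}
    (hk : k ≠ 0) : Subgroup.centralizer {(of a * of b) ^ k} ≤ Subgroup.zpowers (of a * of b) := by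
  classical
  intro x hx
  replace hx : Commute x ((of a * of b) ^ k) := Subgroup.mem_centralizer_singleton_iff.1 hx
  by_cases hchain : (normalForm ((of a * of b) ^ k) ++ normalForm x).IsChain (·.1 ≠ ·.1)
  · exact mem_zpowers_of_commute_pow_of_isChain hij ha hb hk hx hchain
  rw [← Subgroup.inv_mem_iff]
  exact mem_zpowers_of_commute_pow_of_isChain hij ha hb hk hx.inv_left
    (isChain_normalForm_of_mul_of_pow_append_inv hij ha hb hk
      (mt (isChain_normalForm_append_swap_of_commute hx) hchain))

theorem not_isOfFinOrder_of_mul_of (hij : i ≠ j) (ha : a ≠ 1) (hb : b ≠ 1) :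
    ¬IsOfFinOrder (of a * of b) := by
  classical
  rw [isOfFinOrder_iff_pow_eq_one]
  rintro ⟨n, hn, hpow⟩
  have : n = 0 := by
    simpa [normalForm_of_mul_of_pow hij ha hb, normalForm_one] using
      congrArg (List.length ∘ normalForm) hpow
  omega

end Monoid.CoprodI

namespace Subgroup

variable {H K : Type*} [Group H] [Group K]

theorem centralizer_zpow_eq_zpowers {g : H}
    (h : ∀ n : ℕ, n ≠ 0 → centralizer {g ^ n} ≤ zpowers g) {k : ℤ}
    (hk : k ≠ 0) : centralizer {g ^ k} = zpowers g := by
  refine le_antisymm (fun x hx => ?_) (fun x ⟨m, hm⟩ => ?_)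
  · obtain ⟨n, rfl | rfl⟩ := Int.eq_nat_or_neg k
    · exact h n (by omega) (by simpa using hx)
    · have hx' : x * (g ^ n)⁻¹ = (g ^ n)⁻¹ * x := by
        simpa using mem_centralizer_singleton_iff.1 hx
      exact h n (by omega) (mem_centralizer_singleton_iff.2 (Commute.inv_right_iff.1 hx'))
  · subst hm
    exact mem_centralizer_singleton_iff.2 (Commute.zpow_zpow_self g m k)

theorem centralizer_pow_le_zpowers_of_injective {φ : H →* K} (hφ : Function.Injective φ)
    {g : H} {n : ℕ} (h : centralizer {φ g ^ n} ≤ zpowers (φ g)) :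
    centralizer {g ^ n} ≤ zpowers g := by
  intro x hx
  rw [← mem_map_iff_mem hφ, MonoidHom.map_zpowers]
  apply h
  rw [mem_centralizer_singleton_iff] at hx ⊢
  rw [← map_pow, ← map_mul, ← map_mul, hx]

end Subgroup

universe u v

namespace Monoid.Coprod

abbrev boolFamily (A : Type u) (B : Type v) : Bool → Type (max u v) :=
  fun i => cond i (ULift.{v} A) (ULift.{u} B)

instance (A : Type u) (B : Type v) [Group A] [Group B] : ∀ i, Group (boolFamily A B i)
  | true => inferInstanceAs (Group (ULift A))
  | false => inferInstanceAs (Group (ULift B))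

variable {A : Type u} {B : Type v} [Group A] [Group B]

def toCoprodI : Monoid.Coprod A B →* CoprodI (boolFamily A B) :=
  lift ((CoprodI.of (i := true)).comp MulEquiv.ulift.symm.toMonoidHom)
    ((CoprodI.of (i := false)).comp MulEquiv.ulift.symm.toMonoidHom)

@[simp]
theorem toCoprodI_inl (a : A) :
    toCoprodI (inl a : Monoid.Coprod A B) = CoprodI.of (i := true) ⟨a⟩ :=
  lift_apply_inl _ _ a

@[simp]
theorem toCoprodI_inr (b : B) :
    toCoprodI (inr b : Monoid.Coprod A B) = CoprodI.of (i := false) ⟨b⟩ :=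
  lift_apply_inr _ _ b

theorem toCoprodI_injective : Function.Injective (toCoprodI : Monoid.Coprod A B →* _) := by
  let ψ : CoprodI (boolFamily A B) →* Monoid.Coprod A B := CoprodI.lift fun
    | true => inl.comp MulEquiv.ulift.toMonoidHom
    | false => inr.comp MulEquiv.ulift.toMonoidHom
  have hψ : ψ.comp toCoprodI = MonoidHom.id _ := by
    apply hom_ext <;> ext <;> simp [ψ, toCoprodI]
  exact Function.LeftInverse.injective (DFunLike.congr_fun hψ)

end Monoid.Coprod

theorem free_product_has_laurent_type_centralizer_general (A B : Type*) [Group A] [Group B]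
    [Nontrivial A] [Nontrivial B] :
    ∃ g : Monoid.Coprod A B,
      ¬IsOfFinOrder g ∧
      Subgroup.centralizer {g} = Subgroup.zpowers g ∧
      Nonempty (Subgroup.zpowers g ≃* Multiplicative ℤ) ∧
      ∀ k : ℤ, k ≠ 0 → Subgroup.centralizer {g ^ k} = Subgroup.centralizer {g} := by
  obtain ⟨a, ha⟩ := exists_ne (1 : A)
  obtain ⟨b, hb⟩ := exists_ne (1 : B)
  set g : Monoid.Coprod A B := .inl a * .inr b
  have hφ := Monoid.Coprod.toCoprodI_injective (A := A) (B := B)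
  have himage : Monoid.Coprod.toCoprodI g = .of (i := true) ⟨a⟩ * .of (i := false) ⟨b⟩ := by
    simp [g]
  have ha' : (⟨a⟩ : Monoid.Coprod.boolFamily A B true) ≠ 1 := ULift.up_injective.ne ha
  have hb' : (⟨b⟩ : Monoid.Coprod.boolFamily A B false) ≠ 1 := ULift.up_injective.ne hb
  have hord : ¬IsOfFinOrder g := by
    rw [← hφ.isOfFinOrder_iff, himage]
    exact Monoid.CoprodI.not_isOfFinOrder_of_mul_of (by decide) ha' hb'
  have hcent (n : ℕ) (hn : n ≠ 0) : Subgroup.centralizer {g ^ n} ≤ Subgroup.zpowers g := by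
    refine Subgroup.centralizer_pow_le_zpowers_of_injective hφ ?_
    rw [himage]
    exact Monoid.CoprodI.centralizer_of_mul_of_pow_le_zpowers (by decide) ha' hb' hn
  have hcent₁ : Subgroup.centralizer {g} = Subgroup.zpowers g := by
    simpa using Subgroup.centralizer_zpow_eq_zpowers hcent one_ne_zero
  have hinj : Function.Injective (zpowersHom _ g) :=
    (injective_zpow_iff_not_isOfFinOrder.2 hord).comp Multiplicative.toAdd.injective
  exact ⟨g, hord, hcent₁, ⟨(MonoidHom.ofInjective hinj).symm⟩,
    fun k hk => (Subgroup.centralizer_zpow_eq_zpowers hcent hk).trans hcent₁.symm⟩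

/-- Let `G = A ∗ B` be the free product of two nontrivial groups which are not
both of order 2. Then there is an element `g` of infinite order whose
centralizer is the infinite cyclic subgroup `⟨g⟩ ≅ ℤ`, and moreover
`C_G(gᵏ) = C_G(g)` for every nonzero integer `k`. -/
theorem free_product_has_laurent_type_centralizer (A B : Type*) [Group A] [Group B]
    [Nontrivial A] [Nontrivial B] (h2 : ¬(Nat.card A = 2 ∧ Nat.card B = 2)) :
    ∃ g : Monoid.Coprod A B,
      ¬IsOfFinOrder g ∧
      Subgroup.centralizer {g} = Subgroup.zpowers g ∧
      Nonempty (Subgroup.zpowers g ≃* Multiplicative ℤ) ∧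
      ∀ k : ℤ, k ≠ 0 → Subgroup.centralizer {g ^ k} = Subgroup.centralizer {g} :=
  free_product_has_laurent_type_centralizer_general A B
end
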